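/- If T : C(X) → C(X) is fully order preserving (dim X ≥ 2), then the map γ : X* × ℝ → ℝ giving the additive constant of T(h_{u,α}) is affine, i.e., γ(s(u₁,α₁)+(1−s)(u₂,α₂)) = sγ(u₁,α₁)+(1−s)γ(u₂,α₂) for all u₁,u₂ ∈ X*, α₁,α₂ ∈ ℝ, s ∈ [0,1]. -/

import Mathlib

open Set

noncomputable section

variable {X : Type*}

/-- The class of proper, lower semicontinuous, convex functions `X → ℝ ∪ {+∞}`,
encoded as `EReal`-valued functions never taking the value `⊥`. -/
def IsClFun (X : Type*) [NormedAddCommGroup X] [NormedSpace ℝ X] (f : X → EReal) : Prop :=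
  (∀ x, f x ≠ ⊥) ∧ (∃ x, f x ≠ ⊤) ∧ LowerSemicontinuous f ∧
  ∀ x y : X, ∀ a b : ℝ, 0 ≤ a → 0 ≤ b → a + b = 1 →
    f (a • x + b • y) ≤ (a : EReal) * f x + (b : EReal) * f y

/-- `C(X)`, as a subtype. -/
abbrev Cl (X : Type*) [NormedAddCommGroup X] [NormedSpace ℝ X] :=
  {f : X → EReal // IsClFun X f}

/-- The continuous affine function `h_{u,α}(x) = ⟨u,x⟩ + α`. -/
def aff [NormedAddCommGroup X] [NormedSpace ℝ X] (u : X →L[ℝ] ℝ) (α : ℝ) : X → EReal :=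
  fun x => ((u x + α : ℝ) : EReal)

theorem affMem [NormedAddCommGroup X] [NormedSpace ℝ X] (u : X →L[ℝ] ℝ) (α : ℝ) :
    IsClFun X (aff u α) := by
  refine ⟨fun x => EReal.coe_ne_bot _, ⟨0, EReal.coe_ne_top _⟩, ?_, ?_⟩
  · exact (continuous_coe_real_ereal.comp (by continuity)).lowerSemicontinuous
  · intro x y a b ha hb hab
    simp only [aff, map_add, map_smul, smul_eq_mul]
    rw [← EReal.coe_mul, ← EReal.coe_mul, ← EReal.coe_add, EReal.coe_le_coe_iff]
    have h : a * α + b * α = α := by rw [← add_mul, hab, one_mul]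
    nlinarith

/-- `h_{u,α}` as an element of `C(X)`. -/
def affCl [NormedAddCommGroup X] [NormedSpace ℝ X] (u : X →L[ℝ] ℝ) (α : ℝ) : Cl X :=
  ⟨aff u α, affMem u α⟩

/-- An operator on `C(X)` is fully order preserving if it is onto and
`f ≤ g ↔ T f ≤ T g` (pointwise order). -/
def FullyOrderPreserving [NormedAddCommGroup X] [NormedSpace ℝ X]
    (T : Cl X → Cl X) : Prop :=
  Function.Surjective T ∧ ∀ f g : Cl X, f.1 ≤ g.1 ↔ (T f).1 ≤ (T g).1

/-!
`T` is an order automorphism of `C(X)`, so it preserves the supremum of two affine functions.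
For `u₁ ≠ u₂`, an affine minorant `h_{w,β}` of `max(h_{u₁,α₁}, h_{u₂,α₂})` must have
`w = s u₁ + (1 - s) u₂` with `s ∈ [0, 1]` and `β ≤ s α₁ + (1 - s) α₂`; transporting this through
`T` gives `γ(w, s α₁ + (1 - s) α₂) = t γ(u₁, α₁) + (1 - t) γ(u₂, α₂)` for a weight `t`. Each
`γ(u, ·)` is then a monotone surjective solution of Cauchy's equation, `γ(u, α) = κ(u) α + γ(u, 0)`.
Comparing slopes shows that `1 / κ` is affine along segments and positive on `X*`, hence constant,
and this forces `t = s`.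
-/

theorem LinearMap.exists_convex_combination_eq_zero {E : Type*} [AddCommGroup E] [Module ℝ E]
    (q₁ q₂ : E →ₗ[ℝ] ℝ) (h : ∀ x, 0 ≤ q₁ x ∨ 0 ≤ q₂ x) :
    ∃ t ∈ Icc (0 : ℝ) 1, t • q₁ + (1 - t) • q₂ = 0 := by
  by_cases hq₁ : q₁ = 0
  · exact ⟨1, ⟨zero_le_one, le_rfl⟩, by simp [hq₁]⟩
  obtain ⟨x₁, hx₁⟩ : ∃ x₁, q₁ x₁ = 1 := by
    obtain ⟨x, hx⟩ : ∃ x, q₁ x ≠ 0 := by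
      by_contra! h₀
      exact hq₁ (LinearMap.ext h₀)
    exact ⟨(q₁ x)⁻¹ • x, by simp [hx]⟩
  -- otherwise `-x₁ + c • z` would make both functionals negative
  have hker : ∀ z, q₁ z = 0 → q₂ z = 0 := by
    intro z hz
    by_contra hz₂
    have hx := h (-x₁ + ((q₂ x₁ - 1) / q₂ z) • z)
    simp only [map_add, map_neg, map_smul, smul_eq_mul, hz, hx₁, div_mul_cancel₀ _ hz₂] at hx
    rcases hx with hx | hx <;> linarith
  set r := q₂ x₁
  have hq₂ : ∀ x, q₂ x = r * q₁ x := by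
    intro x
    have := hker (x - q₁ x • x₁) (by simp [hx₁])
    simp only [map_sub, map_smul, smul_eq_mul] at this
    linarith
  have hr : r ≤ 0 := by
    rcases h (-x₁) with h' | h' <;> simp only [map_neg, hx₁, hq₂] at h' <;> linarith
  refine ⟨-r / (1 - r), ⟨by apply div_nonneg <;> linarith, by rw [div_le_one] <;> linarith⟩, ?_⟩
  ext x
  have h1r : 1 - r ≠ 0 := by linarith
  simp only [LinearMap.add_apply, LinearMap.smul_apply, smul_eq_mul, hq₂, LinearMap.zero_apply]
  field_simp
  ring

theorem eq_of_map_convex_combination_of_bddBelow {E : Type*} [AddCommGroup E] [Module ℝ E]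
    {f : E → ℝ}
    (hf : ∀ (u v : E), ∀ s ∈ Icc (0 : ℝ) 1, f (s • u + (1 - s) • v) = s * f u + (1 - s) * f v)
    (hb : BddBelow (range f)) (u v : E) : f u = f v := by
  obtain ⟨m, hm⟩ := hb
  have hm' : ∀ x, m ≤ f x := fun x => hm (mem_range_self x)
  -- along the ray through `v`, `f` is affine, so it cannot decrease without becoming unbounded
  have hge : ∀ v, f 0 ≤ f v := by
    intro v
    by_contra! hlt
    set t := 1 + (f 0 - m) / (f 0 - f v)
    have hd : 0 < f 0 - f v := by linarith
    have ht : 1 ≤ t := le_add_of_nonneg_right (div_nonneg (by linarith [hm' 0]) hd.le)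
    have hray := hf (t • v) 0 t⁻¹ ⟨by positivity, inv_le_one_of_one_le₀ ht⟩
    rw [smul_zero, add_zero, smul_smul, inv_mul_cancel₀ (by positivity), one_smul] at hray
    have hft : f (t • v) = f 0 - t * (f 0 - f v) := by
      field_simp at hray
      linarith
    have htd : t * (f 0 - f v) = f 0 - f v + (f 0 - m) := by
      simp only [t]
      field_simp
    linarith [hm' (t • v)]
  have hmid : ∀ v, f v = f 0 := by
    intro v
    have h := hf v (-v) (1 / 2) ⟨by norm_num, by norm_num⟩
    rw [show (1 / 2 : ℝ) • v + (1 - 1 / 2 : ℝ) • -v = 0 by module] at h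
    linarith [hge v, hge (-v)]
  rw [hmid u, hmid v]

theorem slopes_of_affine_convex_combination {g g₁ g₂ : ℝ → ℝ} {k k₁ k₂ s t : ℝ}
    (hg : ∀ α, g α = k * α + g 0) (hg₁ : ∀ α, g₁ α = k₁ * α + g₁ 0)
    (hg₂ : ∀ α, g₂ α = k₂ * α + g₂ 0)
    (h : ∀ α₁ α₂, g (s * α₁ + (1 - s) * α₂) = t * g₁ α₁ + (1 - t) * g₂ α₂) :
    k * s = t * k₁ ∧ k * (1 - s) = (1 - t) * k₂ := by
  have h₀ := h 0 0
  have h₁ := h 1 0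
  have h₂ := h 0 1
  simp only [mul_zero, mul_one, add_zero, zero_add] at h₀ h₁ h₂
  rw [hg s, hg₁ 1] at h₁
  rw [hg (1 - s), hg₂ 1] at h₂
  constructor
  · linear_combination h₁ - h₀
  · linear_combination h₂ - h₀

section Affine

variable [NormedAddCommGroup X] [NormedSpace ℝ X]

theorem aff_le_aff_iff {u v : X →L[ℝ] ℝ} {α β : ℝ} :
    aff u α ≤ aff v β ↔ u = v ∧ α ≤ β := by
  refine ⟨fun h => ?_, fun ⟨huv, hαβ⟩ x => EReal.coe_le_coe (by rw [huv]; linarith)⟩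
  have hr : ∀ x, u x + α ≤ v x + β := fun x => EReal.coe_le_coe_iff.mp (h x)
  refine ⟨ContinuousLinearMap.ext fun x => ?_, by simpa using hr 0⟩
  by_contra hne
  have hd : u x - v x ≠ 0 := sub_ne_zero.mpr hne
  have := hr (((β - α + 1) / (u x - v x)) • x)
  simp only [map_smul, smul_eq_mul] at this
  have : (β - α + 1) / (u x - v x) * (u x - v x) = β - α + 1 := div_mul_cancel₀ _ hd
  linarith

theorem affCl_le_affCl_iff {u v : X →L[ℝ] ℝ} {α β : ℝ} :
    affCl u α ≤ affCl v β ↔ u = v ∧ α ≤ β :=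
  aff_le_aff_iff

theorem affCl_inj {u v : X →L[ℝ] ℝ} {α β : ℝ} :
    affCl u α = affCl v β ↔ u = v ∧ α = β := by
  rw [le_antisymm_iff, affCl_le_affCl_iff, affCl_le_affCl_iff]
  constructor
  · rintro ⟨⟨rfl, h₁⟩, -, h₂⟩
    exact ⟨rfl, le_antisymm h₁ h₂⟩
  · rintro ⟨rfl, rfl⟩
    exact ⟨⟨rfl, le_rfl⟩, rfl, le_rfl⟩

theorem isClFun_coe_of_continuous_of_convexOn {φ : X → ℝ} (hc : Continuous φ)
    (hφ : ConvexOn ℝ univ φ) : IsClFun X (fun x => (φ x : EReal)) := by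
  refine ⟨fun _ => EReal.coe_ne_bot _, ⟨0, EReal.coe_ne_top _⟩,
    (continuous_coe_real_ereal.comp hc).lowerSemicontinuous, fun x y a b ha hb hab => ?_⟩
  rw [← EReal.coe_mul, ← EReal.coe_mul, ← EReal.coe_add]
  exact EReal.coe_le_coe (hφ.2 (mem_univ x) (mem_univ y) ha hb hab)

def supAff (u₁ : X →L[ℝ] ℝ) (α₁ : ℝ) (u₂ : X →L[ℝ] ℝ) (α₂ : ℝ) : Cl X :=
  ⟨aff u₁ α₁ ⊔ aff u₂ α₂, by
    have hconv (u : X →L[ℝ] ℝ) (α : ℝ) : ConvexOn ℝ univ (fun x => u x + α) :=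
      (u.toLinearMap.convexOn convex_univ).add_const α
    convert isClFun_coe_of_continuous_of_convexOn (φ := fun x => max (u₁ x + α₁) (u₂ x + α₂))
      (by fun_prop) ((hconv u₁ α₁).sup (hconv u₂ α₂)) using 1
    funext x
    exact (EReal.coe_strictMono.monotone.map_max).symm⟩

theorem isLUB_supAff (u₁ : X →L[ℝ] ℝ) (α₁ : ℝ) (u₂ : X →L[ℝ] ℝ) (α₂ : ℝ) :
    IsLUB {affCl u₁ α₁, affCl u₂ α₂} (supAff u₁ α₁ u₂ α₂) := by
  refine ⟨?_, fun g hg => ?_⟩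
  · rintro f (rfl | rfl)
    exacts [le_sup_left (a := aff u₁ α₁), le_sup_right (b := aff u₂ α₂)]
  · show aff u₁ α₁ ⊔ aff u₂ α₂ ≤ g.1
    exact sup_le (hg (mem_insert _ _)) (hg (mem_insert_of_mem _ rfl))

theorem aff_le_aff_sup_aff_iff {w u₁ u₂ : X →L[ℝ] ℝ} {β α₁ α₂ : ℝ} :
    aff w β ≤ aff u₁ α₁ ⊔ aff u₂ α₂ ↔ ∀ x, w x + β ≤ u₁ x + α₁ ∨ w x + β ≤ u₂ x + α₂ := by
  simp only [Pi.le_def, Pi.sup_apply, aff, le_sup_iff, EReal.coe_le_coe_iff]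

theorem exists_eq_convex_combination_of_aff_le_sup {w u₁ u₂ : X →L[ℝ] ℝ} {β α₁ α₂ : ℝ}
    (h : aff w β ≤ aff u₁ α₁ ⊔ aff u₂ α₂) :
    ∃ t ∈ Icc (0 : ℝ) 1, w = t • u₁ + (1 - t) • u₂ := by
  rw [aff_le_aff_sup_aff_iff] at h
  -- if `u₁ - w` and `u₂ - w` were both negative at `x`, `h` would fail far out along `x`
  have hsign : ∀ x, 0 ≤ (u₁ - w) x ∨ 0 ≤ (u₂ - w) x := by
    intro x
    by_contra! hneg
    simp only [sub_apply] at hneg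
    set c := max ((α₁ - β + 1) / (w x - u₁ x)) ((α₂ - β + 1) / (w x - u₂ x))
    have hc₁ : α₁ - β + 1 ≤ c * (w x - u₁ x) :=
      (div_le_iff₀ (by linarith)).mp (le_max_left _ _)
    have hc₂ : α₂ - β + 1 ≤ c * (w x - u₂ x) :=
      (div_le_iff₀ (by linarith)).mp (le_max_right _ _)
    have := h (c • x)
    simp only [map_smul, smul_eq_mul] at this
    rcases this with h' | h' <;> nlinarith
  obtain ⟨t, ht, heq⟩ := LinearMap.exists_convex_combination_eq_zero
    (u₁ - w).toLinearMap (u₂ - w).toLinearMap hsign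
  refine ⟨t, ht, ContinuousLinearMap.ext fun x => ?_⟩
  have := LinearMap.congr_fun heq x
  simp only [LinearMap.add_apply, LinearMap.smul_apply, ContinuousLinearMap.coe_coe,
    sub_apply, smul_eq_mul, LinearMap.zero_apply] at this
  simp only [add_apply, smul_apply, smul_eq_mul]
  linarith

theorem aff_convex_combination_le_sup_iff {u₁ u₂ : X →L[ℝ] ℝ} (hu : u₁ ≠ u₂) {t : ℝ}
    (ht : t ∈ Icc (0 : ℝ) 1) {β α₁ α₂ : ℝ} :
    aff (t • u₁ + (1 - t) • u₂) β ≤ aff u₁ α₁ ⊔ aff u₂ α₂ ↔ β ≤ t * α₁ + (1 - t) * α₂ := by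
  simp only [aff_le_aff_sup_aff_iff, add_apply, smul_apply, smul_eq_mul]
  constructor
  · -- test at a point where the two affine functions agree
    intro h
    obtain ⟨x₀, hx₀⟩ : ∃ x₀, u₁ x₀ - u₂ x₀ = α₂ - α₁ := by
      obtain ⟨x, hx⟩ : ∃ x, u₁ x - u₂ x ≠ 0 := by
        by_contra! h₀
        exact hu (ContinuousLinearMap.ext fun x => sub_eq_zero.mp (h₀ x))
      refine ⟨((α₂ - α₁) / (u₁ x - u₂ x)) • x, ?_⟩
      simp only [map_smul, smul_eq_mul, ← mul_sub, div_mul_cancel₀ _ hx]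
    rcases h x₀ with h' | h'
    · linear_combination h' + (1 - t) * hx₀
    · linear_combination h' - t * hx₀
  · intro h x
    rcases le_total (u₁ x + α₁) (u₂ x + α₂) with h' | h'
    · right; nlinarith [mul_le_mul_of_nonneg_left h' ht.1]
    · left; nlinarith [mul_le_mul_of_nonneg_left h' (sub_nonneg.mpr ht.2)]

theorem exists_eq_aff_of_forall_le_or_ge {u : X →L[ℝ] ℝ} {g : X → EReal}
    (hbot : ∀ x, g x ≠ ⊥) (htop : ∃ x, g x ≠ ⊤) (h : ∀ α, aff u α ≤ g ∨ g ≤ aff u α) :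
    ∃ A, g = aff u A := by
  obtain ⟨α₀, hα₀⟩ : ∃ α₀, g ≤ aff u α₀ := by
    by_contra! hlow
    obtain ⟨x₀, hx₀⟩ := htop
    refine hx₀ ((EReal.eq_top_iff_forall_lt _).mpr fun r => ?_)
    have := (h (r + 1 - u x₀)).resolve_right (hlow _) x₀
    simp only [aff, add_sub_cancel] at this
    exact lt_of_lt_of_le (EReal.coe_lt_coe (lt_add_one r)) this
  have hreal : ∀ x, g x = ((g x).toReal : EReal) := fun x =>
    (EReal.coe_toReal (ne_top_of_le_ne_top (EReal.coe_ne_top _) (hα₀ x)) (hbot x)).symm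
  set φ : X → ℝ := fun x => (g x).toReal - u x
  have hφ : ∀ x x', φ x ≤ φ x' := by
    intro x x'
    by_contra! hlt
    rcases h ((φ x + φ x') / 2) with h' | h'
    · have := h' x'
      rw [hreal x', aff, EReal.coe_le_coe_iff] at this
      simp only [φ] at hlt this
      linarith
    · have := h' x
      rw [hreal x, aff, EReal.coe_le_coe_iff] at this
      simp only [φ] at hlt this
      linarith
  refine ⟨φ 0, funext fun x => ?_⟩
  have := le_antisymm (hφ x 0) (hφ 0 x)
  rw [hreal x, aff, EReal.coe_eq_coe_iff]
  simp only [φ] at this ⊢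
  linarith

end Affine

namespace FullyOrderPreserving

variable [NormedAddCommGroup X] [NormedSpace ℝ X] {T : Cl X → Cl X}

def toOrderIso (hT : FullyOrderPreserving T) : Cl X ≃o Cl X :=
  OrderIso.ofSurjective (OrderEmbedding.ofMapLEIff T fun f g => (hT.2 f g).symm) hT.1

@[simp]
theorem coe_toOrderIso (hT : FullyOrderPreserving T) : ⇑hT.toOrderIso = T :=
  rfl

variable {y : (X →L[ℝ] ℝ) → (X →L[ℝ] ℝ)} {γ : (X →L[ℝ] ℝ) → ℝ → ℝ}
  (hrep : ∀ (u : X →L[ℝ] ℝ) (α : ℝ), (T (affCl u α)).1 = aff (y u) (γ u α))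

include hrep in
theorem map_affCl (u : X →L[ℝ] ℝ) (α : ℝ) : T (affCl u α) = affCl (y u) (γ u α) :=
  Subtype.ext (hrep u α)

variable (hT : FullyOrderPreserving T)
include hT hrep

theorem gamma_le_gamma_iff (u : X →L[ℝ] ℝ) {α β : ℝ} : γ u α ≤ γ u β ↔ α ≤ β := by
  calc γ u α ≤ γ u β ↔ affCl (y u) (γ u α) ≤ affCl (y u) (γ u β) := by
        simp only [affCl_le_affCl_iff, true_and]
    _ ↔ affCl u α ≤ affCl u β := by
        rw [← map_affCl hrep, ← map_affCl hrep]
        exact (hT.2 _ _).symm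
    _ ↔ α ≤ β := by simp only [affCl_le_affCl_iff, true_and]

theorem gamma_monotone (u : X →L[ℝ] ℝ) : Monotone (γ u) :=
  fun _ _ h => (gamma_le_gamma_iff hrep hT u).mpr h

theorem gamma_surjective (u : X →L[ℝ] ℝ) : Function.Surjective (γ u) := by
  intro c
  obtain ⟨g, hg⟩ := hT.1 (affCl (y u) c)
  have hcmp : ∀ α, aff u α ≤ g.1 ∨ g.1 ≤ aff u α := by
    intro α
    rcases le_total (γ u α) c with h | h
    · left
      exact (hT.2 (affCl u α) g).mpr (by rw [hg, map_affCl hrep]; exact aff_le_aff_iff.mpr ⟨rfl, h⟩)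
    · right
      exact (hT.2 g (affCl u α)).mpr (by rw [hg, map_affCl hrep]; exact aff_le_aff_iff.mpr ⟨rfl, h⟩)
  obtain ⟨A, hA⟩ := exists_eq_aff_of_forall_le_or_ge g.2.1 g.2.2.1 hcmp
  have hgA : g = affCl u A := Subtype.ext hA
  have hγA : affCl (y u) (γ u A) = affCl (y u) c := by rw [← map_affCl hrep, ← hgA, hg]
  exact ⟨A, (affCl_inj.mp hγA).2⟩

theorem y_injective : Function.Injective y := by
  intro u₁ u₂ h
  obtain ⟨α, hα⟩ := gamma_surjective hrep hT u₂ (γ u₁ 0)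
  have : T (affCl u₁ 0) = T (affCl u₂ α) := by rw [map_affCl hrep, map_affCl hrep, h, hα]
  have hinj : Function.Injective T := by simpa using hT.toOrderIso.injective
  exact (affCl_inj.mp (hinj this)).1

theorem map_supAff (u₁ : X →L[ℝ] ℝ) (α₁ : ℝ) (u₂ : X →L[ℝ] ℝ) (α₂ : ℝ) :
    T (supAff u₁ α₁ u₂ α₂) = supAff (y u₁) (γ u₁ α₁) (y u₂) (γ u₂ α₂) := by
  have h := hT.toOrderIso.isLUB_image'.mpr (isLUB_supAff u₁ α₁ u₂ α₂)
  simp only [coe_toOrderIso, image_pair, map_affCl hrep] at h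
  exact h.unique (isLUB_supAff _ _ _ _)

theorem exists_gamma_convex_combination {u₁ u₂ : X →L[ℝ] ℝ} (hu : u₁ ≠ u₂) {s : ℝ}
    (hs : s ∈ Icc (0 : ℝ) 1) :
    ∃ t : ℝ, ∀ α₁ α₂ : ℝ, γ (s • u₁ + (1 - s) • u₂) (s * α₁ + (1 - s) * α₂) =
      t * γ u₁ α₁ + (1 - t) * γ u₂ α₂ := by
  set w := s • u₁ + (1 - s) • u₂
  have hmap : ∀ α₁ α₂ β, aff w β ≤ aff u₁ α₁ ⊔ aff u₂ α₂ ↔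
      aff (y w) (γ w β) ≤ aff (y u₁) (γ u₁ α₁) ⊔ aff (y u₂) (γ u₂ α₂) := fun α₁ α₂ β =>
    (hT.2 (affCl w β) (supAff u₁ α₁ u₂ α₂)).trans (by rw [map_affCl hrep, map_supAff hrep hT]; rfl)
  obtain ⟨t, ht, hyw⟩ := exists_eq_convex_combination_of_aff_le_sup
    ((hmap 0 0 0).mp ((aff_convex_combination_le_sup_iff hu hs).mpr (by simp)))
  have hyu : y u₁ ≠ y u₂ := (y_injective hrep hT).ne hu
  have hiff : ∀ α₁ α₂ β, γ w β ≤ t * γ u₁ α₁ + (1 - t) * γ u₂ α₂ ↔ β ≤ s * α₁ + (1 - s) * α₂ := by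
    intro α₁ α₂ β
    rw [← aff_convex_combination_le_sup_iff hyu ht, ← hyw, ← hmap,
      aff_convex_combination_le_sup_iff hu hs]
  refine ⟨t, fun α₁ α₂ => le_antisymm ((hiff α₁ α₂ _).mpr le_rfl) ?_⟩
  obtain ⟨β, hβ⟩ := gamma_surjective hrep hT w (t * γ u₁ α₁ + (1 - t) * γ u₂ α₂)
  rw [← hβ]
  exact gamma_monotone hrep hT w ((hiff α₁ α₂ β).mp hβ.le)

theorem exists_slope [Nontrivial (X →L[ℝ] ℝ)] (u : X →L[ℝ] ℝ) :
    ∃ κ > 0, ∀ α, γ u α = κ * α + γ u 0 := by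
  obtain ⟨p, hp⟩ := exists_ne (0 : X →L[ℝ] ℝ)
  have hne : u + p ≠ u - p := by
    intro h
    have h2 : (2 : ℝ) • p = (u + p) - (u - p) := by module
    rw [h, sub_self] at h2
    exact hp ((smul_eq_zero.mp h2).resolve_left two_ne_zero)
  obtain ⟨t, ht⟩ :=
    hT.exists_gamma_convex_combination hrep hne (s := 1 / 2) ⟨by norm_num, by norm_num⟩
  rw [show (1 / 2 : ℝ) • (u + p) + (1 - 1 / 2 : ℝ) • (u - p) = u by module] at ht
  have hsplit : ∀ a b, γ u (a + b) = t * γ (u + p) (2 * a) + (1 - t) * γ (u - p) (2 * b) :=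
    fun a b => by rw [← ht]; congr 1; ring
  set F : ℝ → ℝ := fun α => γ u α - γ u 0
  have hadd : ∀ a b, F (a + b) = F a + F b := by
    intro a b
    have h₁ := hsplit a b
    have h₂ := hsplit a 0
    have h₃ := hsplit 0 b
    have h₄ := hsplit 0 0
    simp only [add_zero, zero_add, mul_zero] at h₂ h₃ h₄
    simp only [F]
    linarith
  -- a monotone surjection of `ℝ` is continuous, and continuous additive maps are linear
  have hcont : Continuous F :=
    ((hT.gamma_monotone hrep u).continuous_of_surjective (hT.gamma_surjective hrep u)).sub
      continuous_const
  have hlin : ∀ α, F α = α * F 1 := fun α => by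
    simpa using map_real_smul (AddMonoidHom.mk' F hadd) hcont α 1
  refine ⟨F 1, ?_, fun α => ?_⟩
  · have := (hT.gamma_le_gamma_iff hrep u (α := 1) (β := 0)).not.mpr (by norm_num)
    simp only [F]
    linarith [not_le.mp this]
  · have := hlin α
    simp only [F] at this ⊢
    linarith

theorem exists_uniform_slope [Nontrivial (X →L[ℝ] ℝ)] :
    ∃ κ > 0, ∀ u α, γ u α = κ * α + γ u 0 := by
  choose κ hκ₀ hκ using hT.exists_slope hrep
  -- `1 / κ` is affine along segments and positive, hence constant
  have hinv : ∀ (u₁ u₂ : X →L[ℝ] ℝ), ∀ s ∈ Icc (0 : ℝ) 1,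
      (κ (s • u₁ + (1 - s) • u₂))⁻¹ = s * (κ u₁)⁻¹ + (1 - s) * (κ u₂)⁻¹ := by
    intro u₁ u₂ s hs
    rcases eq_or_ne u₁ u₂ with rfl | hu
    · rw [show s • u₁ + (1 - s) • u₁ = u₁ by module]
      ring
    obtain ⟨t, ht⟩ := hT.exists_gamma_convex_combination hrep hu hs
    obtain ⟨h₁, h₂⟩ := slopes_of_affine_convex_combination (hκ _) (hκ u₁) (hκ u₂) ht
    have := hκ₀ (s • u₁ + (1 - s) • u₂)
    have := hκ₀ u₁
    have := hκ₀ u₂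
    field_simp
    linear_combination -κ u₂ * h₁ - κ u₁ * h₂
  have hconst := eq_of_map_convex_combination_of_bddBelow hinv
    ⟨0, by rintro _ ⟨u, rfl⟩; exact (inv_pos.mpr (hκ₀ u)).le⟩
  refine ⟨κ 0, hκ₀ 0, fun u α => ?_⟩
  rw [hκ u α, inv_injective (hconst u 0)]

end FullyOrderPreserving

theorem constant_part_affine_general
    [NormedAddCommGroup X] [NormedSpace ℝ X]
    (hdim : 2 ≤ Module.rank ℝ X)
    (T : Cl X → Cl X) (hT : FullyOrderPreserving T)
    (y : (X →L[ℝ] ℝ) → (X →L[ℝ] ℝ)) (γ : (X →L[ℝ] ℝ) → ℝ → ℝ)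
    (hrep : ∀ (u : X →L[ℝ] ℝ) (α : ℝ), (T (affCl u α)).1 = aff (y u) (γ u α)) :
    ∀ (u₁ u₂ : X →L[ℝ] ℝ) (α₁ α₂ : ℝ) (s : ℝ), 0 ≤ s → s ≤ 1 →
      γ (s • u₁ + (1 - s) • u₂) (s * α₁ + (1 - s) * α₂) =
        s * γ u₁ α₁ + (1 - s) * γ u₂ α₂ := by
  have : Nontrivial X := rank_pos_iff_nontrivial.mp (lt_of_lt_of_le (by norm_num) hdim)
  obtain ⟨κ, hκ₀, hκ⟩ := hT.exists_uniform_slope hrep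
  intro u₁ u₂ α₁ α₂ s hs₀ hs₁
  rcases eq_or_ne u₁ u₂ with rfl | hu
  · rw [show s • u₁ + (1 - s) • u₁ = u₁ by module, hκ u₁ (s * α₁ + _), hκ u₁ α₁, hκ u₁ α₂]
    ring
  obtain ⟨t, ht⟩ := hT.exists_gamma_convex_combination hrep hu ⟨hs₀, hs₁⟩
  have hts : t = s := by
    have := (slopes_of_affine_convex_combination (hκ _) (hκ u₁) (hκ u₂) ht).1
    exact (mul_left_cancel₀ hκ₀.ne' (by linarith)).symm
  rw [ht, hts]

theorem constant_part_affine
    [NormedAddCommGroup X] [NormedSpace ℝ X] [CompleteSpace X]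
    (hdim : 2 ≤ Module.rank ℝ X)
    (T : Cl X → Cl X) (hT : FullyOrderPreserving T)
    (y : (X →L[ℝ] ℝ) → (X →L[ℝ] ℝ)) (γ : (X →L[ℝ] ℝ) → ℝ → ℝ)
    (hrep : ∀ (u : X →L[ℝ] ℝ) (α : ℝ), (T (affCl u α)).1 = aff (y u) (γ u α)) :
    ∀ (u₁ u₂ : X →L[ℝ] ℝ) (α₁ α₂ : ℝ) (s : ℝ), 0 ≤ s → s ≤ 1 →
      γ (s • u₁ + (1 - s) • u₂) (s * α₁ + (1 - s) * α₂) =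
        s * γ u₁ α₁ + (1 - s) * γ u₂ α₂ :=
  constant_part_affine_general hdim T hT y γ hrep
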